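/- Let U = {U_i}_{i∈I} be a cover of a finite poset X by lower sets, let x ∈ X, let J = { i ∈ I : x ∈ U_i } and let C be the connected component of W_J containing x. Consider the relation R ⊆ X × Ĥ(U)ᵒᵖ given by z R (J',C') iff z ∈ C'. Then the closure, in Ĥ(U)ᵒᵖ, of R(F_x) = { (J',C') : some z ≥ x lies in C' } equals the set F_{(J,C)} of all elements of Ĥ(U)ᵒᵖ that are ≥ (J,C); in particular this closure has a minimum element, namely (J,C). -/

import Mathlib

/-! Every element `(J', C')` of `Ĥ(U)` with some `z ≥ x` in `C'` lies above `(J, C)`: since the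
`U_i` are lower sets, `x ∈ W_{J'}`, so `J' ⊆ J` by maximality of `J`; and `x`, being comparable
with `z`, lies in `C'`, so the component `C` of `x` in the smaller set `W_J` is contained in
`C'`. Hence the closure of `R(F_x)` is the down-set of `(J, C)` in `Ĥ(U)`. -/

/-- The comparability relation inside a subset `U` of a poset. -/
def posetCompRel {X : Type*} [PartialOrder X] (U : Set X) (a b : X) : Prop :=
  a ∈ U ∧ b ∈ U ∧ (a ≤ b ∨ b ≤ a)

/-- `C` is a connected component of `U` (w.r.t. the equivalence relation generated by
comparability inside `U`). -/
def IsComponent {X : Type*} [PartialOrder X] (U C : Set X) : Prop :=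
  ∃ u ∈ U, C = {z | z ∈ U ∧ Relation.EqvGen (posetCompRel U) u z}

/-- A pair `(J, C)` is a valid element of the completion poset `Ĥ(U)` if
`W_J = ⋂_{i ∈ J} U_i` is nonempty and `C` is a connected component of `W_J`. -/
def ValidPair {X I : Type*} [PartialOrder X] (Uc : I → Set X)
    (p : Set I × Set X) : Prop :=
  (⋂ i ∈ p.1, Uc i).Nonempty ∧ IsComponent (⋂ i ∈ p.1, Uc i) p.2

/-- The order of the completion poset: `(J, C) ≤ (J', C')` iff `J ⊆ J'` and `C' ⊆ C`. -/
def cylLeP {X I : Type*} (p q : Set I × Set X) : Prop :=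
  p.1 ⊆ q.1 ∧ q.2 ⊆ p.2

section Component

variable {X : Type*} [PartialOrder X] {U V C : Set X} {x z : X}

def posetComponent (U : Set X) (x : X) : Set X :=
  {z | z ∈ U ∧ Relation.EqvGen (posetCompRel U) x z}

lemma posetCompRel_mono (h : U ⊆ V) : ∀ a b, posetCompRel U a b → posetCompRel V a b :=
  fun _ _ ⟨ha, hb, hab⟩ => ⟨h ha, h hb, hab⟩

lemma mem_posetComponent_self (hx : x ∈ U) : x ∈ posetComponent U x :=
  ⟨hx, Relation.EqvGen.refl x⟩

lemma posetComponent_mono (h : U ⊆ V) : posetComponent U x ⊆ posetComponent V x :=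
  fun _ ⟨hz, hxz⟩ => ⟨h hz, hxz.mono (posetCompRel_mono h)⟩

lemma isComponent_posetComponent (hx : x ∈ U) : IsComponent U (posetComponent U x) :=
  ⟨x, hx, rfl⟩

lemma IsComponent.subset (hC : IsComponent U C) : C ⊆ U := by
  obtain ⟨u, -, rfl⟩ := hC
  exact fun _ hz => hz.1

lemma IsComponent.eq_posetComponent (hC : IsComponent U C) (hx : x ∈ C) :
    C = posetComponent U x := by
  obtain ⟨u, -, rfl⟩ := hC
  ext z
  exact ⟨fun ⟨hz, huz⟩ => ⟨hz, hx.2.symm.trans _ _ _ huz⟩,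
    fun ⟨hz, hxz⟩ => ⟨hz, hx.2.trans _ _ _ hxz⟩⟩

lemma IsComponent.mem_of_le (hC : IsComponent U C) (hz : z ∈ C) (hx : x ∈ U) (hxz : x ≤ z) :
    x ∈ C := by
  have hzU := hC.subset hz
  rw [hC.eq_posetComponent hz]
  exact ⟨hx, Relation.EqvGen.rel _ _ ⟨hzU, hx, Or.inr hxz⟩⟩

end Component

section Cover

variable {X I : Type*} {Uc : I → Set X} {x : X}

lemma mem_biInter_setOf_mem (x : X) : x ∈ ⋂ i ∈ {i | x ∈ Uc i}, Uc i :=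
  Set.mem_iInter₂.2 fun _ hi => hi

lemma subset_setOf_mem_of_mem_biInter {J : Set I} (hx : x ∈ ⋂ i ∈ J, Uc i) :
    J ⊆ {i | x ∈ Uc i} :=
  fun i hi => Set.mem_iInter₂.1 hx i hi

variable [PartialOrder X]

lemma cylLeP_of_mem_of_le (hl : ∀ i, IsLowerSet (Uc i)) {p q : Set I × Set X}
    (hp : ValidPair Uc p) (hq : ValidPair Uc q) (hpq : cylLeP p q) {z : X} (hxz : x ≤ z)
    (hzq : z ∈ q.2) :
    cylLeP p ({i | x ∈ Uc i}, posetComponent (⋂ i ∈ {i | x ∈ Uc i}, Uc i) x) := by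
  have hxWq : x ∈ ⋂ i ∈ q.1, Uc i :=
    isLowerSet_iInter₂ (fun i _ => hl i) hxz (hq.2.subset hzq)
  have hpJ : p.1 ⊆ {i | x ∈ Uc i} := hpq.1.trans (subset_setOf_mem_of_mem_biInter hxWq)
  have hWJ : ⋂ i ∈ {i | x ∈ Uc i}, Uc i ⊆ ⋂ i ∈ p.1, Uc i :=
    Set.biInter_subset_biInter_left hpJ
  have hxp : x ∈ p.2 := hp.2.mem_of_le (hpq.2 hzq) (hWJ (mem_biInter_setOf_mem x)) hxz
  exact ⟨hpJ, hp.2.eq_posetComponent hxp ▸ posetComponent_mono hWJ⟩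

end Cover

theorem stmt17_general {X I : Type*} [PartialOrder X] (Uc : I → Set X)
    (hl : ∀ i, IsLowerSet (Uc i))
    (x : X) (J : Set I) (hJ : J = {i : I | x ∈ Uc i}) (C : Set X)
    (hC : C = {z : X | z ∈ ⋂ i ∈ J, Uc i ∧
        Relation.EqvGen (posetCompRel (⋂ i ∈ J, Uc i)) x z}) :
    ({p : Set I × Set X | ValidPair Uc p ∧
        ∃ q : Set I × Set X, ValidPair Uc q ∧ (∃ z : X, x ≤ z ∧ z ∈ q.2) ∧
          cylLeP p q} =
      {p : Set I × Set X | ValidPair Uc p ∧ cylLeP p (J, C)}) ∧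
    ValidPair Uc (J, C) := by
  subst hJ hC
  have hxW := mem_biInter_setOf_mem (Uc := Uc) x
  have hvalid :
      ValidPair Uc ({i | x ∈ Uc i}, posetComponent (⋂ i ∈ {i | x ∈ Uc i}, Uc i) x) :=
    ⟨⟨x, hxW⟩, isComponent_posetComponent hxW⟩
  refine ⟨Set.ext fun p => ⟨?_, ?_⟩, hvalid⟩
  · rintro ⟨hp, q, hq, ⟨z, hxz, hzq⟩, hpq⟩
    exact ⟨hp, cylLeP_of_mem_of_le hl hp hq hpq hxz hzq⟩
  · rintro ⟨hp, hpJC⟩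
    exact ⟨hp, _, hvalid, ⟨x, le_rfl, mem_posetComponent_self hxW⟩, hpJC⟩

/-- For `x ∈ X`, `J = { i : x ∈ U_i }` and `C` the component of `W_J` containing `x`,
the closure in `Ĥ(U)ᵒᵖ` of `R(F_x)` (for the relation `z R (J',C')` iff `z ∈ C'`)
equals the up-set `F_{(J,C)}` of `(J,C)` in `Ĥ(U)ᵒᵖ`, i.e. the set of elements below
`(J,C)` in `Ĥ(U)`; in particular it has minimum `(J,C)` (which is a valid pair). -/
theorem stmt17 {X I : Type*} [PartialOrder X] [Fintype X] (Uc : I → Set X)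
    (hl : ∀ i, IsLowerSet (Uc i)) (hcov : ∀ x : X, ∃ i, x ∈ Uc i)
    (x : X) (J : Set I) (hJ : J = {i : I | x ∈ Uc i}) (C : Set X)
    (hC : C = {z : X | z ∈ ⋂ i ∈ J, Uc i ∧
        Relation.EqvGen (posetCompRel (⋂ i ∈ J, Uc i)) x z}) :
    ({p : Set I × Set X | ValidPair Uc p ∧
        ∃ q : Set I × Set X, ValidPair Uc q ∧ (∃ z : X, x ≤ z ∧ z ∈ q.2) ∧
          cylLeP p q} =
      {p : Set I × Set X | ValidPair Uc p ∧ cylLeP p (J, C)}) ∧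
    ValidPair Uc (J, C) :=
  stmt17_general Uc hl x J hJ C hC
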